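/- arXiv:2008.05301 — 5 statements merged into one kernel-verified Lean document; each statement's English description precedes it below -/
import Mathlib

section
/- Let 0 < a < b, 1 < σ ≤ 2, and define the Green's function G(x,τ) on [a,b]×[a,b] by G(x,τ) = (1/Γ(σ))·[((ln(x/a)/ln(b/a))^{σ−1}·(ln(b/τ))^{σ−1} − (ln(x/τ))^{σ−1})/τ] for a ≤ τ ≤ x ≤ b, and G(x,τ) = (1/Γ(σ))·(ln(x/a)/ln(b/a))^{σ−1}·(ln(b/τ))^{σ−1}/τ for a ≤ x ≤ τ ≤ b. Then for every fixed x ∈ [a,b], Γ(σ+1)·∫_a^b G(x,τ) dτ = (ln(b/a))·(ln(x/a))^{σ−1} − (ln(x/a))^{σ}. -/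
/-!
For fixed `x`, the Green function is `(C φ_b - φ_x) / Γ(σ)` on `(a, x)` and `C φ_b / Γ(σ)`
on `(x, b)`, where `φ_d τ = log (d / τ) ^ (σ - 1) / τ` and
`C = (log (x / a) / log (b / a)) ^ (σ - 1)`.
Since `-log (d / τ) ^ σ / σ` is an antiderivative of `φ_d`, `∫ τ in c..d, φ_d τ` equals
`log (d / c) ^ σ / σ`, and `Γ(σ + 1) = σ Γ(σ)` cancels the remaining constants.
-/

open Real Set intervalIntegral

theorem intervalIntegrable_log_div_rpow_div {c e d s : ℝ} (hc : 0 < c) (he : 0 < e)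
    (hd : 0 < d) (hs : 1 ≤ s) :
    IntervalIntegrable (fun τ => log (d / τ) ^ (s - 1) / τ) MeasureTheory.volume c e := by
  apply ContinuousOn.intervalIntegrable
  intro τ hτ
  have hτ0 : τ ≠ 0 := by
    rcases le_total c e with h | h
    · rw [uIcc_of_le h] at hτ; linarith [hτ.1]
    · rw [uIcc_of_ge h] at hτ; linarith [hτ.1]
  apply ContinuousAt.continuousWithinAt
  fun_prop (disch := first | positivity | assumption | (left; positivity) | (right; linarith))

theorem integral_log_div_rpow_div {c d s : ℝ} (hc : 0 < c) (hcd : c ≤ d) (hs : 1 ≤ s) :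
    ∫ τ in c..d, log (d / τ) ^ (s - 1) / τ = log (d / c) ^ s / s := by
  have hd : 0 < d := hc.trans_le hcd
  have hderiv : ∀ τ ∈ uIcc c d,
      HasDerivAt (fun t => -(log (d / t) ^ s / s)) (log (d / τ) ^ (s - 1) / τ) τ := by
    intro τ hτ
    rw [uIcc_of_le hcd] at hτ
    have hτ0 : 0 < τ := hc.trans_le hτ.1
    have hlog : HasDerivAt (fun t => log (d / t)) (-τ⁻¹) τ := by
      convert ((hasDerivAt_const τ d).fun_div (hasDerivAt_id' τ) hτ0.ne').log (by positivity)
        using 1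
      field_simp
      ring
    refine ((hlog.rpow_const (Or.inr hs)).div_const s).fun_neg.congr_deriv ?_
    field_simp
  rw [integral_eq_sub_of_hasDerivAt hderiv (intervalIntegrable_log_div_rpow_div hc hd hd hs)]
  simp [zero_rpow (by positivity : s ≠ 0)]

theorem integral_eq_sub_integral_of_eqOn_Ioo {E : Type*} [NormedAddCommGroup E]
    [NormedSpace ℝ E] {F f g : ℝ → E} {a x b : ℝ} (hax : a ≤ x) (hxb : x ≤ b)
    (hf : IntervalIntegrable f MeasureTheory.volume a b)
    (hg : IntervalIntegrable g MeasureTheory.volume a x)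
    (hlow : EqOn F (f - g) (Ioo a x)) (hhigh : EqOn F f (Ioo x b)) :
    ∫ τ in a..b, F τ = (∫ τ in a..b, f τ) - ∫ τ in a..x, g τ := by
  have hx : x ∈ uIcc a b := by rw [uIcc_of_le (hax.trans hxb)]; exact ⟨hax, hxb⟩
  have hf₁ : IntervalIntegrable f MeasureTheory.volume a x :=
    hf.mono_set (uIcc_subset_uIcc_left hx)
  have hf₂ : IntervalIntegrable f MeasureTheory.volume x b :=
    hf.mono_set (uIcc_subset_uIcc_right hx)
  have hlow' : EqOn F (f - g) (uIoo a x) := uIoo_of_le hax ▸ hlow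
  have hhigh' : EqOn F f (uIoo x b) := uIoo_of_le hxb ▸ hhigh
  calc ∫ τ in a..b, F τ = (∫ τ in a..x, F τ) + ∫ τ in x..b, F τ :=
        (integral_add_adjacent_intervals ((hf₁.sub hg).congr_uIoo hlow'.symm)
          (hf₂.congr_uIoo hhigh'.symm)).symm
    _ = ((∫ τ in a..x, f τ) - ∫ τ in a..x, g τ) + ∫ τ in x..b, f τ := by
        rw [integral_congr_uIoo hlow', integral_congr_uIoo hhigh', ← integral_sub hf₁ hg]
        rfl
    _ = (∫ τ in a..b, f τ) - ∫ τ in a..x, g τ := by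
        rw [← integral_add_adjacent_intervals hf₁ hf₂]
        abel

theorem div_rpow_sub_one_mul_rpow {l L s : ℝ} (hl : 0 ≤ l) (hL : 0 < L) :
    (l / L) ^ (s - 1) * L ^ s = L * l ^ (s - 1) := by
  rw [div_rpow hl hL.le, rpow_sub_one hL.ne']
  have : L ^ s ≠ 0 := by positivity
  field_simp

theorem stmt_4_general (a b σ : ℝ) (ha : 0 < a) (hab : a < b) (hσ1 : 1 < σ)
    (G : ℝ → ℝ → ℝ)
    (hG : ∀ x τ, G x τ =
      if τ ≤ x then
        (1 / Real.Gamma σ) *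
          (((Real.log (x / a) / Real.log (b / a)) ^ (σ - 1) * (Real.log (b / τ)) ^ (σ - 1)
            - (Real.log (x / τ)) ^ (σ - 1)) / τ)
      else
        (1 / Real.Gamma σ) *
          ((Real.log (x / a) / Real.log (b / a)) ^ (σ - 1) * (Real.log (b / τ)) ^ (σ - 1) / τ)) :
    ∀ x ∈ Icc a b,
      Real.Gamma (σ + 1) * ∫ τ in a..b, G x τ
        = Real.log (b / a) * (Real.log (x / a)) ^ (σ - 1) - (Real.log (x / a)) ^ σ := by
  rintro x ⟨hax, hxb⟩
  set C := (log (x / a) / log (b / a)) ^ (σ - 1)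
  have hb : 0 < b := ha.trans hab
  have hx : 0 < x := ha.trans_le hax
  have hintegral : ∫ τ in a..b, G x τ
      = 1 / Gamma σ * (C * (log (b / a) ^ σ / σ)) - 1 / Gamma σ * (log (x / a) ^ σ / σ) := by
    rw [integral_eq_sub_integral_of_eqOn_Ioo hax hxb
      (f := fun τ => 1 / Gamma σ * (C * (log (b / τ) ^ (σ - 1) / τ)))
      (g := fun τ => 1 / Gamma σ * (log (x / τ) ^ (σ - 1) / τ)),
      integral_const_mul, integral_const_mul, integral_const_mul,
      integral_log_div_rpow_div ha hab.le hσ1.le, integral_log_div_rpow_div ha hax hσ1.le]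
    · exact ((intervalIntegrable_log_div_rpow_div ha hb hb hσ1.le).const_mul _).const_mul _
    · exact (intervalIntegrable_log_div_rpow_div ha hx hx hσ1.le).const_mul _
    · intro τ hτ
      simp only [hG, if_pos hτ.2.le, Pi.sub_apply]
      ring
    · intro τ hτ
      simp only [hG, if_neg (not_le.2 hτ.1)]
      ring
  have hL : 0 < log (b / a) := log_pos ((one_lt_div ha).2 hab)
  have hl : 0 ≤ log (x / a) := log_nonneg ((one_le_div ha).2 hax)
  have hΓ : Gamma σ ≠ 0 := (Gamma_pos_of_pos (by positivity)).ne'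
  rw [hintegral, Gamma_add_one (by positivity), ← div_rpow_sub_one_mul_rpow hl hL]
  field_simp
  ring

theorem stmt_4 (a b σ : ℝ) (ha : 0 < a) (hab : a < b) (hσ1 : 1 < σ) (hσ2 : σ ≤ 2)
    (G : ℝ → ℝ → ℝ)
    (hG : ∀ x τ, G x τ =
      if τ ≤ x then
        (1 / Real.Gamma σ) *
          (((Real.log (x / a) / Real.log (b / a)) ^ (σ - 1) * (Real.log (b / τ)) ^ (σ - 1)
            - (Real.log (x / τ)) ^ (σ - 1)) / τ)
      else
        (1 / Real.Gamma σ) *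
          ((Real.log (x / a) / Real.log (b / a)) ^ (σ - 1) * (Real.log (b / τ)) ^ (σ - 1) / τ)) :
    ∀ x ∈ Icc a b,
      Real.Gamma (σ + 1) * ∫ τ in a..b, G x τ
        = Real.log (b / a) * (Real.log (x / a)) ^ (σ - 1) - (Real.log (x / a)) ^ σ :=
  stmt_4_general a b σ ha hab hσ1 G hG
end

section
/- Let 0 < a < b, 1 < σ ≤ 2, and let G be the Green's function G(x,τ) = (1/Γ(σ))·[((ln(x/a)/ln(b/a))^{σ−1}·(ln(b/τ))^{σ−1} − (ln(x/τ))^{σ−1})/τ] for a ≤ τ ≤ x ≤ b, and G(x,τ) = (1/Γ(σ))·(ln(x/a)/ln(b/a))^{σ−1}·(ln(b/τ))^{σ−1}/τ for a ≤ x ≤ τ ≤ b. Then max over x ∈ [a,b] of ∫_a^b |G(x,τ)| dτ equals (σ−1)^{σ−1}·(ln(b/a))^{σ}/(σ^{σ+1}·Γ(σ)). -/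
open Real Set

/-!
Since `G ≥ 0` on `[a, b]²`, the integral of `|G(x, ·)|` is that of `G(x, ·)`, and it can be
computed in closed form because `τ ↦ -(log c - log τ) ^ σ / σ` is a primitive of
`τ ↦ (log c - log τ) ^ (σ - 1) / τ`. With `u = log (x / a) / log (b / a)`, which runs over `[0, 1]`
as `x` runs over `[a, b]`, one finds `∫ₐᵇ G(x, τ) dτ = log (b / a) ^ σ / (σ Γ(σ)) · u ^ (σ - 1) (1 - u)`.
By weighted AM-GM, `u ^ (σ - 1) (1 - u)` is maximal at `u = (σ - 1) / σ`, with maximum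
`(σ - 1) ^ (σ - 1) / σ ^ σ`.
-/

theorem rpow_mul_one_sub_rpow_le {w₁ w₂ s : ℝ} (hw₁ : 0 < w₁) (hw₂ : 0 < w₂) (hw : w₁ + w₂ = 1)
    (hs₀ : 0 ≤ s) (hs₁ : s ≤ 1) : s ^ w₁ * (1 - s) ^ w₂ ≤ w₁ ^ w₁ * w₂ ^ w₂ := by
  have amgm := geom_mean_le_arith_mean2_weighted hw₁.le hw₂.le (div_nonneg hs₀ hw₁.le)
    (div_nonneg (sub_nonneg.2 hs₁) hw₂.le) hw
  have hsum : w₁ * (s / w₁) + w₂ * ((1 - s) / w₂) = 1 := by field_simp; ring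
  rwa [hsum, div_rpow hs₀ hw₁.le, div_rpow (sub_nonneg.2 hs₁) hw₂.le, div_mul_div_comm,
    div_le_one (by positivity)] at amgm

theorem isGreatest_rpow_sub_one_mul_one_sub {σ : ℝ} (hσ : 1 < σ) :
    IsGreatest ((fun s => s ^ (σ - 1) * (1 - s)) '' Icc 0 1) ((σ - 1) ^ (σ - 1) / σ ^ σ) := by
  have hσ₀ : 0 < σ := by linarith
  have hw₁ : 0 < (σ - 1) / σ := div_pos (by linarith) hσ₀
  have hw₂ : 0 < 1 / σ := by positivity
  have hw₁σ : (σ - 1) / σ * σ = σ - 1 := by field_simp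
  have hw₂σ : 1 / σ * σ = 1 := by field_simp
  have hσσ : 0 < σ ^ σ := by positivity
  have hmax : ((σ - 1) / σ) ^ (σ - 1) * (1 / σ) = (σ - 1) ^ (σ - 1) / σ ^ σ := by
    rw [div_rpow (by linarith) hσ₀.le, rpow_sub_one hσ₀.ne']
    field_simp
  refine ⟨⟨(σ - 1) / σ, ⟨hw₁.le, (div_le_one hσ₀).2 (by linarith)⟩, ?_⟩, ?_⟩
  · rw [← hmax]
    dsimp only
    rw [one_sub_div hσ₀.ne', sub_sub_cancel]
  rintro _ ⟨s, ⟨hs₀, hs₁⟩, rfl⟩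
  have hs₁' : 0 ≤ 1 - s := by linarith
  have key := rpow_le_rpow (by positivity) (rpow_mul_one_sub_rpow_le hw₁ hw₂
    (by field_simp; ring) hs₀ hs₁) hσ₀.le
  rwa [mul_rpow (by positivity) (by positivity), mul_rpow (by positivity) (by positivity),
    ← rpow_mul hs₀, ← rpow_mul hs₁', ← rpow_mul hw₁.le, ← rpow_mul hw₂.le, hw₁σ, hw₂σ,
    rpow_one, rpow_one, hmax] at key

section LogKernel

variable {a x σ : ℝ}

theorem continuousOn_log_sub_log_rpow_div (c : ℝ) {s : Set ℝ} (hσ : 1 ≤ σ) (hs : ∀ τ ∈ s, τ ≠ 0) :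
    ContinuousOn (fun τ => (log c - log τ) ^ (σ - 1) / τ) s :=
  ((continuousOn_const.sub (continuousOn_log.mono hs)).rpow_const
    fun _ _ => Or.inr (by linarith)).div continuousOn_id hs

theorem hasDerivAt_log_sub_log_rpow (c : ℝ) (hσ : 1 ≤ σ) {τ : ℝ} (hτ : τ ≠ 0) :
    HasDerivAt (fun τ => -(log c - log τ) ^ σ / σ) ((log c - log τ) ^ (σ - 1) / τ) τ := by
  have h := ((hasDerivAt_rpow_const (Or.inr hσ)).comp τ
    ((hasDerivAt_log hτ).const_sub (log c))).neg.div_const σ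
  refine h.congr_deriv ?_
  field_simp [(by linarith : σ ≠ 0)]

theorem ne_zero_of_mem_uIcc (ha : 0 < a) (hx : 0 < x) {τ : ℝ} (hτ : τ ∈ uIcc a x) : τ ≠ 0 :=
  (lt_of_lt_of_le (lt_min ha hx) hτ.1).ne'

theorem intervalIntegrable_log_sub_log_rpow_div (c : ℝ) (hσ : 1 ≤ σ) (ha : 0 < a) (hx : 0 < x) :
    IntervalIntegrable (fun τ => (log c - log τ) ^ (σ - 1) / τ) MeasureTheory.volume a x :=
  (continuousOn_log_sub_log_rpow_div c hσ fun _ => ne_zero_of_mem_uIcc ha hx).intervalIntegrable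

theorem integral_log_sub_log_rpow_div (c : ℝ) (hσ : 1 ≤ σ) (ha : 0 < a) (hx : 0 < x) :
    ∫ τ in a..x, (log c - log τ) ^ (σ - 1) / τ =
      ((log c - log a) ^ σ - (log c - log x) ^ σ) / σ := by
  rw [intervalIntegral.integral_eq_sub_of_hasDerivAt
    (fun τ hτ => hasDerivAt_log_sub_log_rpow c hσ (ne_zero_of_mem_uIcc ha hx hτ))
    (intervalIntegrable_log_sub_log_rpow_div c hσ ha hx)]
  ring

end LogKernel

noncomputable def hadamardGreen (a b σ x τ : ℝ) : ℝ :=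
  if τ ≤ x then
    1 / Gamma σ * (((log (x / a) / log (b / a)) ^ (σ - 1) * log (b / τ) ^ (σ - 1)
      - log (x / τ) ^ (σ - 1)) / τ)
  else
    1 / Gamma σ * ((log (x / a) / log (b / a)) ^ (σ - 1) * log (b / τ) ^ (σ - 1) / τ)

namespace hadamardGreen

variable {a b σ x : ℝ}

theorem eqOn_Icc_left (ha : 0 < a) (hb : 0 < b) (hax : a ≤ x) :
    EqOn (hadamardGreen a b σ x) (fun τ =>
      1 / Gamma σ * (log (x / a) / log (b / a)) ^ (σ - 1) * ((log b - log τ) ^ (σ - 1) / τ)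
        - 1 / Gamma σ * ((log x - log τ) ^ (σ - 1) / τ)) (Icc a x) := by
  intro τ ⟨haτ, hτx⟩
  have hτ : τ ≠ 0 := (ha.trans_le haτ).ne'
  rw [hadamardGreen, if_pos hτx, log_div hb.ne' hτ, log_div (ha.trans_le hax).ne' hτ]
  ring

theorem eqOn_Icc_right (hσ : 1 < σ) (hb : 0 < b) (hx : 0 < x) :
    EqOn (hadamardGreen a b σ x) (fun τ =>
      1 / Gamma σ * (log (x / a) / log (b / a)) ^ (σ - 1) * ((log b - log τ) ^ (σ - 1) / τ))
      (Icc x b) := by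
  intro τ ⟨hxτ, _⟩
  have hτ : τ ≠ 0 := (hx.trans_le hxτ).ne'
  rw [hadamardGreen, log_div hb.ne' hτ]
  split_ifs with hτx
  · rw [le_antisymm hτx hxτ, div_self hx.ne', log_one, zero_rpow (by linarith)]
    ring
  · ring

theorem nonneg (hσ : 1 < σ) (ha : 0 < a) (hab : a < b) (hx : x ∈ Icc a b) {τ : ℝ}
    (hτ : τ ∈ Icc a b) : 0 ≤ hadamardGreen a b σ x τ := by
  obtain ⟨hax, hxb⟩ := hx
  obtain ⟨haτ, hτb⟩ := hτ
  have hτ₀ : 0 < τ := ha.trans_le haτ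
  have hx₀ : 0 < x := ha.trans_le hax
  have hb : 0 < b := ha.trans hab
  have hL : 0 < log (b / a) := log_pos ((one_lt_div ha).2 hab)
  have hu : 0 ≤ log (x / a) / log (b / a) := div_nonneg (log_nonneg ((one_le_div ha).2 hax)) hL.le
  have hbτ : 0 ≤ log (b / τ) := log_nonneg ((one_le_div hτ₀).2 hτb)
  have hΓ : 0 ≤ 1 / Gamma σ := by have := Gamma_pos_of_pos (by linarith : 0 < σ); positivity
  rw [hadamardGreen]
  split_ifs with hτx
  · refine mul_nonneg hΓ (div_nonneg (sub_nonneg.2 ?_) hτ₀.le)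
    rw [← mul_rpow hu hbτ]
    refine rpow_le_rpow (log_nonneg ((one_le_div hτ₀).2 hτx)) ?_ (by linarith)
    -- in logarithmic coordinates this is `(log τ - log a) * (log b - log x) ≥ 0`
    rw [div_mul_eq_mul_div, le_div_iff₀ hL, log_div hx₀.ne' hτ₀.ne', log_div hx₀.ne' ha.ne',
      log_div hb.ne' hτ₀.ne', log_div hb.ne' ha.ne']
    nlinarith [mul_nonneg (sub_nonneg.2 (log_le_log ha haτ)) (sub_nonneg.2 (log_le_log hx₀ hxb))]
  · positivity

theorem integral_eq (hσ : 1 < σ) (ha : 0 < a) (hab : a < b) (hx : x ∈ Icc a b) :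
    ∫ τ in a..b, hadamardGreen a b σ x τ = log (b / a) ^ σ / (σ * Gamma σ) *
      ((log (x / a) / log (b / a)) ^ (σ - 1) * (1 - log (x / a) / log (b / a))) := by
  obtain ⟨hax, hxb⟩ := hx
  have hb : 0 < b := ha.trans hab
  have hx₀ : 0 < x := ha.trans_le hax
  have hσ₀ : σ ≠ 0 := by linarith
  have hL : 0 < log (b / a) := log_pos ((one_lt_div ha).2 hab)
  have hk (c : ℝ) {l r : ℝ} (hl : 0 < l) (hr : 0 < r) :=
    intervalIntegrable_log_sub_log_rpow_div c hσ.le hl hr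
  have hleft := eqOn_Icc_left (σ := σ) ha hb hax
  have hright := eqOn_Icc_right (a := a) hσ hb hx₀
  rw [← uIcc_of_le hax] at hleft
  rw [← uIcc_of_le hxb] at hright
  set u := log (x / a) / log (b / a)
  have hu : 0 ≤ u := div_nonneg (log_nonneg ((one_le_div ha).2 hax)) hL.le
  set A := 1 / Gamma σ * u ^ (σ - 1) with hA
  have hGx : ∫ τ in a..b, hadamardGreen a b σ x τ =
      A * (∫ τ in a..b, (log b - log τ) ^ (σ - 1) / τ) -
        1 / Gamma σ * ∫ τ in a..x, (log x - log τ) ^ (σ - 1) / τ := by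
    rw [← intervalIntegral.integral_add_adjacent_intervals
        (((hk b ha hx₀).const_mul A).sub ((hk x ha hx₀).const_mul _) |>.congr
          fun τ hτ => (hleft (uIoc_subset_uIcc hτ)).symm)
        (((hk b hx₀ hb).const_mul A).congr fun τ hτ => (hright (uIoc_subset_uIcc hτ)).symm),
      intervalIntegral.integral_congr hleft, intervalIntegral.integral_congr hright,
      intervalIntegral.integral_sub ((hk b ha hx₀).const_mul A) ((hk x ha hx₀).const_mul _),
      intervalIntegral.integral_const_mul, intervalIntegral.integral_const_mul,
      intervalIntegral.integral_const_mul, ← intervalIntegral.integral_add_adjacent_intervals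
        (hk b ha hx₀) (hk b hx₀ hb)]
    ring
  have hlog : log (x / a) = u * log (b / a) := by rw [div_mul_cancel₀ _ hL.ne']
  have hpow : u ^ σ = u ^ (σ - 1) * u := by rw [← rpow_add_one' hu (by linarith), sub_add_cancel]
  rw [hGx, integral_log_sub_log_rpow_div b hσ.le ha hb,
    integral_log_sub_log_rpow_div x hσ.le ha hx₀, sub_self, sub_self, zero_rpow hσ₀,
    ← log_div hb.ne' ha.ne', ← log_div hx₀.ne' ha.ne', hlog, mul_rpow hu hL.le, hpow, hA]
  have hΓ : Gamma σ ≠ 0 := (Gamma_pos_of_pos (by linarith)).ne'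
  field_simp
  ring

theorem integral_abs (hσ : 1 < σ) (ha : 0 < a) (hab : a < b) (hx : x ∈ Icc a b) :
    ∫ τ in a..b, |hadamardGreen a b σ x τ| = ∫ τ in a..b, hadamardGreen a b σ x τ :=
  intervalIntegral.integral_congr fun _ hτ =>
    abs_of_nonneg (nonneg hσ ha hab hx (uIcc_of_le hab.le ▸ hτ))

end hadamardGreen

theorem image_log_div_div_log_Icc {a b : ℝ} (ha : 0 < a) (hab : a < b) :
    (fun x => log (x / a) / log (b / a)) '' Icc a b = Icc 0 1 := by
  have hL : 0 < log (b / a) := log_pos ((one_lt_div ha).2 hab)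
  ext s
  constructor
  · rintro ⟨x, ⟨hax, hxb⟩, rfl⟩
    exact ⟨div_nonneg (log_nonneg ((one_le_div ha).2 hax)) hL.le, (div_le_one hL).2
      (log_le_log (div_pos (ha.trans_le hax) ha) (div_le_div_of_nonneg_right hxb ha.le))⟩
  · rintro ⟨hs₀, hs₁⟩
    refine ⟨a * exp (s * log (b / a)), ⟨le_mul_of_one_le_right ha.le
      (one_le_exp (mul_nonneg hs₀ hL.le)), ?_⟩, ?_⟩
    · calc a * exp (s * log (b / a)) ≤ a * exp (log (b / a)) := by
            gcongr; exact mul_le_of_le_one_left hL.le hs₁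
        _ = b := by rw [exp_log (div_pos (ha.trans hab) ha), mul_div_cancel₀ _ ha.ne']
    · dsimp only
      rw [mul_div_cancel_left₀ _ ha.ne', log_exp, mul_div_cancel_right₀ _ hL.ne']

theorem stmt_5_general (a b σ : ℝ) (ha : 0 < a) (hab : a < b) (hσ1 : 1 < σ)
    (G : ℝ → ℝ → ℝ)
    (hG : ∀ x τ, G x τ =
      if τ ≤ x then
        (1 / Real.Gamma σ) *
          (((Real.log (x / a) / Real.log (b / a)) ^ (σ - 1) * (Real.log (b / τ)) ^ (σ - 1)
            - (Real.log (x / τ)) ^ (σ - 1)) / τ)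
      else
        (1 / Real.Gamma σ) *
          ((Real.log (x / a) / Real.log (b / a)) ^ (σ - 1) * (Real.log (b / τ)) ^ (σ - 1) / τ)) :
    IsGreatest ((fun x => ∫ τ in a..b, |G x τ|) '' Icc a b)
      ((σ - 1) ^ (σ - 1) * (Real.log (b / a)) ^ σ / (σ ^ (σ + 1) * Real.Gamma σ)) := by
  obtain rfl : G = hadamardGreen a b σ := funext₂ hG
  have hσ₀ : 0 < σ := by linarith
  have hΓ : 0 < Gamma σ := Gamma_pos_of_pos hσ₀
  have hL : 0 < log (b / a) := log_pos ((one_lt_div ha).2 hab)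
  have himage : (fun x => ∫ τ in a..b, |hadamardGreen a b σ x τ|) '' Icc a b =
      (log (b / a) ^ σ / (σ * Gamma σ) * ·) '' ((fun s => s ^ (σ - 1) * (1 - s)) ''
        ((fun x => log (x / a) / log (b / a)) '' Icc a b)) := by
    rw [image_image, image_image]
    exact image_congr fun x hx => by
      rw [hadamardGreen.integral_abs hσ1 ha hab hx, hadamardGreen.integral_eq hσ1 ha hab hx]
  have hmax : (σ - 1) ^ (σ - 1) * log (b / a) ^ σ / (σ ^ (σ + 1) * Gamma σ) =
      log (b / a) ^ σ / (σ * Gamma σ) * ((σ - 1) ^ (σ - 1) / σ ^ σ) := by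
    rw [rpow_add_one hσ₀.ne']
    field_simp
  rw [himage, image_log_div_div_log_Icc ha hab, hmax]
  exact (monotone_mul_left_of_nonneg (by positivity)).map_isGreatest
    (isGreatest_rpow_sub_one_mul_one_sub hσ1)

theorem stmt_5 (a b σ : ℝ) (ha : 0 < a) (hab : a < b) (hσ1 : 1 < σ) (hσ2 : σ ≤ 2)
    (G : ℝ → ℝ → ℝ)
    (hG : ∀ x τ, G x τ =
      if τ ≤ x then
        (1 / Real.Gamma σ) *
          (((Real.log (x / a) / Real.log (b / a)) ^ (σ - 1) * (Real.log (b / τ)) ^ (σ - 1)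
            - (Real.log (x / τ)) ^ (σ - 1)) / τ)
      else
        (1 / Real.Gamma σ) *
          ((Real.log (x / a) / Real.log (b / a)) ^ (σ - 1) * (Real.log (b / τ)) ^ (σ - 1) / τ)) :
    IsGreatest ((fun x => ∫ τ in a..b, |G x τ|) '' Icc a b)
      ((σ - 1) ^ (σ - 1) * (Real.log (b / a)) ^ σ / (σ ^ (σ + 1) * Real.Gamma σ)) :=
  stmt_5_general a b σ ha hab hσ1 G hG
end

section
/- Let 0 < a < b, 1 < σ ≤ 2, and let G be the Green's function defined by G(x,τ) = (1/Γ(σ))·[((ln(x/a)/ln(b/a))^{σ−1}·(ln(b/τ))^{σ−1} − (ln(x/τ))^{σ−1})/τ] for a ≤ τ ≤ x ≤ b, and G(x,τ) = (1/Γ(σ))·(ln(x/a)/ln(b/a))^{σ−1}·(ln(b/τ))^{σ−1}/τ for a ≤ x ≤ τ ≤ b. Then G(x,τ) ≥ 0 for all (x,τ) ∈ [a,b]×[a,b]. -/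
open Real Set

theorem stmt_6 (a b σ : ℝ) (ha : 0 < a) (hab : a < b) (hσ1 : 1 < σ) (hσ2 : σ ≤ 2)
    (G : ℝ → ℝ → ℝ)
    (hG : ∀ x τ, G x τ =
      if τ ≤ x then
        (1 / Real.Gamma σ) *
          (((Real.log (x / a) / Real.log (b / a)) ^ (σ - 1) * (Real.log (b / τ)) ^ (σ - 1)
            - (Real.log (x / τ)) ^ (σ - 1)) / τ)
      else
        (1 / Real.Gamma σ) *
          ((Real.log (x / a) / Real.log (b / a)) ^ (σ - 1) * (Real.log (b / τ)) ^ (σ - 1) / τ)) :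
    ∀ x ∈ Icc a b, ∀ τ ∈ Icc a b, 0 ≤ G x τ := by
  intro x hx τ hτ
  obtain ⟨hax, hxb⟩ := hx
  obtain ⟨haτ, hτb⟩ := hτ
  have hx0 : 0 < x := lt_of_lt_of_le ha hax
  have hτ0 : 0 < τ := lt_of_lt_of_le ha haτ
  have hb0 : 0 < b := ha.trans hab
  have hΓ : 0 < Real.Gamma σ := Real.Gamma_pos_of_pos (by linarith)
  have hlba : 0 < Real.log (b / a) := Real.log_pos (by rw [lt_div_iff₀ ha]; linarith)
  have hlxa : 0 ≤ Real.log (x / a) := Real.log_nonneg ((one_le_div ha).2 hax)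
  have hlbτ : 0 ≤ Real.log (b / τ) := Real.log_nonneg ((one_le_div hτ0).2 hτb)
  have hfrac : 0 ≤ Real.log (x / a) / Real.log (b / a) := div_nonneg hlxa hlba.le
  rw [hG]
  by_cases h : τ ≤ x
  · simp only [if_pos h]
    have hlxτ : 0 ≤ Real.log (x / τ) := Real.log_nonneg ((one_le_div hτ0).2 h)
    have key : Real.log (x / τ) ≤ Real.log (x / a) / Real.log (b / a) * Real.log (b / τ) := by
      rw [div_mul_eq_mul_div, le_div_iff₀ hlba]
      rw [Real.log_div hx0.ne' hτ0.ne', Real.log_div hx0.ne' ha.ne',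
          Real.log_div hb0.ne' ha.ne', Real.log_div hb0.ne' hτ0.ne']
      have h1 : Real.log τ ≤ Real.log x := Real.log_le_log hτ0 h
      have h2 : Real.log a ≤ Real.log τ := Real.log_le_log ha haτ
      have h3 : Real.log x ≤ Real.log b := Real.log_le_log hx0 hxb
      nlinarith [mul_nonneg (sub_nonneg.2 h3) (sub_nonneg.2 h2)]
    have h1 : Real.log (x / τ) ^ (σ - 1) ≤
        (Real.log (x / a) / Real.log (b / a) * Real.log (b / τ)) ^ (σ - 1) :=
      Real.rpow_le_rpow hlxτ key (by linarith)
    rw [Real.mul_rpow hfrac hlbτ] at h1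
    apply mul_nonneg (by positivity)
    exact div_nonneg (by linarith) hτ0.le
  · simp only [if_neg h]
    apply mul_nonneg (by positivity)
    apply div_nonneg _ hτ0.le
    exact mul_nonneg (Real.rpow_nonneg hfrac _) (Real.rpow_nonneg hlbτ _)
end

section
/- Let 0 < a < b, 1 < σ ≤ 2, K > 0, and let E = C([a,b], ℝ) with the sup norm. Let G be the Green's function G(x,τ) = (1/Γ(σ))·[((ln(x/a)/ln(b/a))^{σ−1}·(ln(b/τ))^{σ−1} − (ln(x/τ))^{σ−1})/τ] for a ≤ τ ≤ x ≤ b, and G(x,τ) = (1/Γ(σ))·(ln(x/a)/ln(b/a))^{σ−1}·(ln(b/τ))^{σ−1}/τ for a ≤ x ≤ τ ≤ b. Let F : [a,b] × ℝ → ℝ be continuous and K-Lipschitz in its second argument, let B ∈ ℝ, and define R : E → E by (R u)(x) = ∫_a^b G(x,τ)·F(τ, u(τ)) dτ + B·(ln(x/a)/ln(b/a))^{σ−1}. If K·(σ−1)^{σ−1}·(ln(b/a))^{σ}/(σ^{σ+1}·Γ(σ)) < 1, then R has a unique fixed point in E. -/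
/-!
The operator is a contraction of `C([a, b], ℝ)`. The Green's function is nonnegative on the
square, because `log (x / τ) ≤ s * log (b / τ)` with `s = log (x / a) / log (b / a) ∈ [0, 1]`,
and integrating it in `τ` gives `log (b / a) ^ σ / (σ Γ(σ)) * (s ^ (σ - 1) - s ^ σ)`. By weighted
AM-GM, `s ^ (σ - 1) - s ^ σ ≤ (σ - 1) ^ (σ - 1) / σ ^ σ`, so the `K`-Lipschitz nonlinearity makes
the operator Lipschitz with the constant of the hypothesis, which is `< 1`; Banach's fixed point
theorem concludes.
-/

open Real Set Function MeasureTheory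
open scoped NNReal

theorem rpow_sub_rpow_add_one_le {p s : ℝ} (hp : 0 < p) (hs0 : 0 ≤ s) (hs1 : s ≤ 1) :
    s ^ p - s ^ (p + 1) ≤ p ^ p / (p + 1) ^ (p + 1) := by
  have hp1 : 0 < p + 1 := by linarith
  -- the bound is the maximum of `s ^ p * (1 - s)`, attained at `s = p / (p + 1)`
  have amgm := geom_mean_le_arith_mean2_weighted (w₁ := p / (p + 1)) (w₂ := 1 / (p + 1))
    (p₁ := s / p) (p₂ := 1 - s) (by positivity) (by positivity) (by positivity)
    (by linarith) (by field_simp)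
  have hmean : p / (p + 1) * (s / p) + 1 / (p + 1) * (1 - s) = 1 / (p + 1) := by
    field_simp; ring
  rw [hmean] at amgm
  have key := rpow_le_rpow (by positivity) amgm hp1.le
  rw [mul_rpow (by positivity) (rpow_nonneg (by linarith) _), ← rpow_mul (by positivity),
    ← rpow_mul (by linarith), div_mul_cancel₀ _ hp1.ne', one_div_mul_cancel hp1.ne', rpow_one,
    div_rpow hs0 hp.le, div_rpow zero_le_one hp1.le, one_rpow] at key
  rw [rpow_add_one' hs0 hp1.ne', ← mul_one_sub]
  calc s ^ p * (1 - s) = p ^ p * (s ^ p / p ^ p * (1 - s)) := by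
        field_simp
    _ ≤ p ^ p * (1 / (p + 1) ^ (p + 1)) := by gcongr
    _ = p ^ p / (p + 1) ^ (p + 1) := by ring

theorem hasDerivAt_log_div {x τ : ℝ} (hx : x ≠ 0) (hτ : τ ≠ 0) :
    HasDerivAt (fun t => log (x / t)) (-τ⁻¹) τ :=
  (((hasDerivAt_const τ x).div (hasDerivAt_id τ) hτ).log (div_ne_zero hx hτ)).congr_deriv
    (by simp only [Pi.div_apply, id]; field_simp; ring)

theorem integral_rpow_log_div_div {p a x : ℝ} (hp : 1 ≤ p) (ha : 0 < a) (hax : a ≤ x) :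
    ∫ τ in a..x, log (x / τ) ^ (p - 1) / τ = log (x / a) ^ p / p := by
  have hpos : ∀ τ ∈ uIcc a x, 0 < τ := fun τ hτ =>
    ha.trans_le (by rw [uIcc_of_le hax] at hτ; exact hτ.1)
  have hderiv : ∀ τ ∈ uIcc a x,
      HasDerivAt (fun t => -(log (x / t) ^ p / p)) (log (x / τ) ^ (p - 1) / τ) τ := fun τ hτ =>
    (((hasDerivAt_rpow_const (Or.inr hp)).comp τ (hasDerivAt_log_div (ha.trans_le hax).ne'
      (hpos τ hτ).ne')).div_const p).neg.congr_deriv (by field_simp)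
  have hcont : ContinuousOn (fun τ => log (x / τ) ^ (p - 1) / τ) (uIcc a x) := by
    refine ContinuousOn.div ?_ continuousOn_id fun τ hτ => (hpos τ hτ).ne'
    exact (continuous_rpow_const (by linarith)).comp_continuousOn
      ((continuousOn_const.div continuousOn_id fun τ hτ => (hpos τ hτ).ne').log
        fun τ hτ => (div_pos (ha.trans_le hax) (hpos τ hτ)).ne')
  rw [intervalIntegral.integral_eq_sub_of_hasDerivAt hderiv hcont.intervalIntegrable, div_self
    (ha.trans_le hax).ne', log_one, zero_rpow (by linarith)]
  ring

theorem continuousOn_max_zero_rpow_log_div_div {p a b y : ℝ} (hp : 1 ≤ p) (ha : 0 < a)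
    (hy : 0 < y) : ContinuousOn (fun τ => max 0 (log (y / τ)) ^ (p - 1) / τ) (Icc a b) := by
  fun_prop (disch := first | linarith | (rintro τ ⟨hτ, -⟩; have := ha.trans_le hτ; positivity))

theorem integral_max_zero_rpow_log_div_div {p a b x : ℝ} (hp : 1 < p) (ha : 0 < a)
    (hx : x ∈ Icc a b) :
    ∫ τ in a..b, max 0 (log (x / τ)) ^ (p - 1) / τ = log (x / a) ^ p / p := by
  have hx0 : 0 < x := ha.trans_le hx.1
  have hcont := continuousOn_max_zero_rpow_log_div_div (b := b) hp.le ha hx0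
  have hab : a ≤ b := hx.1.trans hx.2
  rw [← intervalIntegral.integral_add_adjacent_intervals
    (hcont.mono (uIcc_subset_Icc (left_mem_Icc.2 hab) hx)).intervalIntegrable
    (hcont.mono (uIcc_subset_Icc hx (right_mem_Icc.2 hab))).intervalIntegrable]
  have hleft : ∫ τ in a..x, max 0 (log (x / τ)) ^ (p - 1) / τ = log (x / a) ^ p / p := by
    rw [← integral_rpow_log_div_div hp.le ha hx.1]
    refine intervalIntegral.integral_congr fun τ hτ => ?_
    rw [uIcc_of_le hx.1] at hτ
    simp only [max_eq_right (log_nonneg ((one_le_div (ha.trans_le hτ.1)).2 hτ.2))]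
  have hright : ∫ τ in x..b, max 0 (log (x / τ)) ^ (p - 1) / τ = 0 := by
    refine (intervalIntegral.integral_congr fun τ hτ => ?_).trans intervalIntegral.integral_zero
    rw [uIcc_of_le hx.2] at hτ
    have hτ0 := hx0.trans_le hτ.1
    simp only [max_eq_left (log_nonpos (by positivity) ((div_le_one hτ0).2 hτ.1)),
      zero_rpow (sub_ne_zero.2 hp.ne'), zero_div]
  rw [hleft, hright, add_zero]

/-- The Green's function of the problem. The positive part `max 0 (log (x / τ))` encodes the case
split `τ ≤ x`: a real power of a negative base is not `0` in Mathlib. -/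
noncomputable def greenKernel (a b σ x τ : ℝ) : ℝ :=
  (1 / Gamma σ) * (((log (x / a) / log (b / a)) ^ (σ - 1) * log (b / τ) ^ (σ - 1)
    - max 0 (log (x / τ)) ^ (σ - 1)) / τ)

theorem continuousOn_greenKernel {a b σ : ℝ} (ha : 0 < a) (hσ : 1 ≤ σ) :
    ContinuousOn (uncurry (greenKernel a b σ)) (Icc a b ×ˢ Icc a b) := by
  have hpos : ∀ x τ, x ∈ Icc a b → τ ∈ Icc a b → 0 < x ∧ 0 < τ ∧ 0 < b := fun x τ hx hτ =>
    ⟨ha.trans_le hx.1, ha.trans_le hτ.1, (ha.trans_le hτ.1).trans_le hτ.2⟩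
  unfold greenKernel uncurry
  fun_prop (disch := first | linarith |
    (rintro ⟨x, τ⟩ ⟨hx, hτ⟩; obtain ⟨_, _, _⟩ := hpos x τ hx hτ; positivity))

theorem greenKernel_nonneg {a b σ x τ : ℝ} (ha : 0 < a) (hab : a < b) (hσ : 1 ≤ σ)
    (hx : x ∈ Icc a b) (hτ : τ ∈ Icc a b) : 0 ≤ greenKernel a b σ x τ := by
  have hx0 : 0 < x := ha.trans_le hx.1
  have hτ0 : 0 < τ := ha.trans_le hτ.1
  have hL : 0 < log (b / a) := log_pos ((one_lt_div ha).2 hab)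
  have hs : 0 ≤ log (x / a) / log (b / a) :=
    div_nonneg (log_nonneg ((one_le_div ha).2 hx.1)) hL.le
  have hbτ : 0 ≤ log (b / τ) := log_nonneg ((one_le_div hτ0).2 hτ.2)
  have hlog : log (x / τ) ≤ log (x / a) / log (b / a) * log (b / τ) := by
    rw [div_mul_eq_mul_div, le_div_iff₀ hL, log_div hx0.ne' hτ0.ne', log_div hx0.ne' ha.ne',
      log_div (ha.trans hab).ne' ha.ne', log_div (ha.trans hab).ne' hτ0.ne']
    nlinarith [mul_nonneg (sub_nonneg.2 (log_le_log ha hτ.1)) (sub_nonneg.2 (log_le_log hx0 hx.2))]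
  have hpow : max 0 (log (x / τ)) ^ (σ - 1) ≤
      (log (x / a) / log (b / a)) ^ (σ - 1) * log (b / τ) ^ (σ - 1) := by
    rw [← mul_rpow hs hbτ]
    exact rpow_le_rpow (le_max_left _ _) (max_le (by positivity) hlog) (by linarith)
  unfold greenKernel
  have := Gamma_pos_of_pos (zero_lt_one.trans_le hσ)
  have := sub_nonneg.2 hpow
  positivity

theorem integral_greenKernel {a b σ x : ℝ} (ha : 0 < a) (hab : a < b) (hσ : 1 < σ)
    (hx : x ∈ Icc a b) :
    ∫ τ in a..b, greenKernel a b σ x τ = log (b / a) ^ σ / (σ * Gamma σ) *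
      ((log (x / a) / log (b / a)) ^ (σ - 1) - (log (x / a) / log (b / a)) ^ σ) := by
  have hx0 : 0 < x := ha.trans_le hx.1
  have hL : 0 < log (b / a) := log_pos ((one_lt_div ha).2 hab)
  set s := log (x / a) / log (b / a) with hs_def
  have hs : 0 ≤ s := div_nonneg (log_nonneg ((one_le_div ha).2 hx.1)) hL.le
  set φ : ℝ → ℝ → ℝ := fun y τ => max 0 (log (y / τ)) ^ (σ - 1) / τ
  have hφ : ∀ y, 0 < y → IntervalIntegrable (φ y) volume a b := fun y hy =>
    (continuousOn_max_zero_rpow_log_div_div hσ.le ha hy).mono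
      (uIcc_subset_Icc (left_mem_Icc.2 hab.le) (right_mem_Icc.2 hab.le)) |>.intervalIntegrable
  have hsplit : ∀ τ ∈ uIcc a b,
      greenKernel a b σ x τ = 1 / Gamma σ * s ^ (σ - 1) * φ b τ - 1 / Gamma σ * φ x τ := by
    intro τ hτ
    rw [uIcc_of_le hab.le] at hτ
    simp only [φ, greenKernel, max_eq_right (log_nonneg ((one_le_div (ha.trans_le hτ.1)).2 hτ.2))]
    ring
  rw [intervalIntegral.integral_congr hsplit, intervalIntegral.integral_sub
    ((hφ b (ha.trans hab)).const_mul _) ((hφ x hx0).const_mul _),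
    intervalIntegral.integral_const_mul, intervalIntegral.integral_const_mul,
    integral_max_zero_rpow_log_div_div hσ ha (right_mem_Icc.2 hab.le),
    integral_max_zero_rpow_log_div_div hσ ha hx,
    show log (x / a) = s * log (b / a) by rw [hs_def, div_mul_cancel₀ _ hL.ne'],
    mul_rpow hs hL.le]
  field_simp

theorem greenKernel_eq_ite {a b σ x τ : ℝ} (hσ : 1 < σ) (hx : 0 < x) (hτ : 0 < τ) :
    greenKernel a b σ x τ =
      if τ ≤ x then
        (1 / Gamma σ) * (((log (x / a) / log (b / a)) ^ (σ - 1) * log (b / τ) ^ (σ - 1)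
          - log (x / τ) ^ (σ - 1)) / τ)
      else
        (1 / Gamma σ) * ((log (x / a) / log (b / a)) ^ (σ - 1) * log (b / τ) ^ (σ - 1) / τ) := by
  unfold greenKernel
  split_ifs with h
  · rw [max_eq_right (log_nonneg ((one_le_div hτ).2 h))]
  · rw [max_eq_left (log_nonpos (by positivity) ((div_le_one hτ).2 (not_le.1 h).le)),
      zero_rpow (by linarith), sub_zero]

theorem integral_greenKernel_le {a b σ x : ℝ} (ha : 0 < a) (hab : a < b) (hσ : 1 < σ)
    (hx : x ∈ Icc a b) :
    ∫ τ in a..b, greenKernel a b σ x τ ≤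
      (σ - 1) ^ (σ - 1) * log (b / a) ^ σ / (σ ^ (σ + 1) * Gamma σ) := by
  have hσ0 : 0 < σ := by linarith
  have hL : 0 < log (b / a) := log_pos ((one_lt_div ha).2 hab)
  have hs0 : 0 ≤ log (x / a) / log (b / a) :=
    div_nonneg (log_nonneg ((one_le_div ha).2 hx.1)) hL.le
  have hs1 : log (x / a) / log (b / a) ≤ 1 :=
    (div_le_one hL).2 (log_le_log (div_pos (ha.trans_le hx.1) ha) (by gcongr; exact hx.2))
  have hmax := rpow_sub_rpow_add_one_le (sub_pos.2 hσ) hs0 hs1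
  rw [sub_add_cancel] at hmax
  have := Gamma_pos_of_pos hσ0
  calc ∫ τ in a..b, greenKernel a b σ x τ
      ≤ log (b / a) ^ σ / (σ * Gamma σ) * ((σ - 1) ^ (σ - 1) / σ ^ σ) := by
        rw [integral_greenKernel ha hab hσ hx]
        gcongr
    _ = (σ - 1) ^ (σ - 1) * log (b / a) ^ σ / (σ ^ (σ + 1) * Gamma σ) := by
        rw [rpow_add hσ0, rpow_one]
        field_simp

section IntegralEquation

variable {a b : ℝ} {k f : ℝ → ℝ → ℝ}

theorem continuous_integral_mul_of_continuousOn (hab : a ≤ b)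
    (hk : ContinuousOn (uncurry k) (Icc a b ×ˢ Icc a b)) {h : ℝ → ℝ}
    (hh : ContinuousOn h (Icc a b)) :
    Continuous fun x : Icc a b => ∫ τ in a..b, k x τ * h τ := by
  have hproj : ∀ x : Icc a b, ∫ τ in a..b, k x τ * h τ =
      ∫ τ in a..b, k x (projIcc a b hab τ) * h (projIcc a b hab τ) := fun x =>
    intervalIntegral.integral_congr fun τ hτ => by
      rw [uIcc_of_le hab] at hτ
      simp only [projIcc_of_mem hab hτ]
  simp only [hproj]
  refine intervalIntegral.continuous_parametric_intervalIntegral_of_continuous' ?_ a b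
  have hproj_cont : Continuous fun q : Icc a b × ℝ => (projIcc a b hab q.2 : ℝ) := by fun_prop
  exact (hk.comp_continuous (continuous_subtype_val.comp continuous_fst |>.prodMk hproj_cont)
    fun q => ⟨q.1.2, (projIcc a b hab q.2).2⟩).mul
    (hh.comp_continuous hproj_cont fun q => (projIcc a b hab q.2).2)

theorem abs_integral_mul_sub_integral_mul_le {κ φ ψ : ℝ → ℝ} {d : ℝ} (hab : a ≤ b)
    (hκ : ContinuousOn κ (Icc a b)) (hφ : ContinuousOn φ (Icc a b))
    (hψ : ContinuousOn ψ (Icc a b)) (hκ0 : ∀ τ ∈ Icc a b, 0 ≤ κ τ)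
    (hd : ∀ τ ∈ Icc a b, |φ τ - ψ τ| ≤ d) :
    |(∫ τ in a..b, κ τ * φ τ) - ∫ τ in a..b, κ τ * ψ τ| ≤ (∫ τ in a..b, κ τ) * d := by
  have hint : ∀ {g : ℝ → ℝ}, ContinuousOn g (Icc a b) → IntervalIntegrable g volume a b :=
    fun hg => (hg.mono (uIcc_subset_Icc (left_mem_Icc.2 hab) (right_mem_Icc.2 hab)))
      |>.intervalIntegrable
  rw [← intervalIntegral.integral_sub (hint (g := fun τ => κ τ * φ τ) (hκ.mul hφ))
    (hint (g := fun τ => κ τ * ψ τ) (hκ.mul hψ)),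
    ← intervalIntegral.integral_mul_const]
  refine (intervalIntegral.abs_integral_le_integral_abs hab).trans
    (intervalIntegral.integral_mono_on hab (hint ((hκ.mul hφ).sub (hκ.mul hψ)).abs)
      (hint (hκ.mul continuousOn_const)) fun τ hτ => ?_)
  rw [← mul_sub, abs_mul, abs_of_nonneg (hκ0 τ hτ)]
  exact mul_le_mul_of_nonneg_left (hd τ hτ) (hκ0 τ hτ)

theorem existsUnique_eq_integral_mul_add (hab : a ≤ b) {K M : ℝ≥0}
    (hk : ContinuousOn (uncurry k) (Icc a b ×ˢ Icc a b))
    (hk_nonneg : ∀ x ∈ Icc a b, ∀ τ ∈ Icc a b, 0 ≤ k x τ)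
    (hk_int : ∀ x ∈ Icc a b, ∫ τ in a..b, k x τ ≤ M)
    (hf : ContinuousOn (uncurry f) (Icc a b ×ˢ univ))
    (hf_lip : ∀ τ ∈ Icc a b, LipschitzWith K (f τ)) (hKM : K * M < 1) (g : C(Icc a b, ℝ)) :
    ∃! u : C(Icc a b, ℝ), ∀ x : Icc a b,
      u x = (∫ τ in a..b, k x τ * f τ (IccExtend hab u τ)) + g x := by
  have hfu : ∀ u : C(Icc a b, ℝ), ContinuousOn (fun τ => f τ (IccExtend hab u τ)) (Icc a b) :=
    fun u => hf.comp (continuousOn_id.prodMk u.continuous.Icc_extend'.continuousOn)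
      fun τ hτ => ⟨hτ, mem_univ _⟩
  let T : C(Icc a b, ℝ) → C(Icc a b, ℝ) := fun u =>
    ⟨fun x => (∫ τ in a..b, k x τ * f τ (IccExtend hab u τ)) + g x,
      (continuous_integral_mul_of_continuousOn hab hk (hfu u)).add g.continuous⟩
  have hT : ContractingWith (K * M) T := by
    refine ⟨hKM, LipschitzWith.of_dist_le_mul fun u v => ?_⟩
    rw [ContinuousMap.dist_le (by positivity)]
    intro x
    have hkx : ContinuousOn (k x) (Icc a b) :=
      hk.comp (continuousOn_const.prodMk continuousOn_id) fun τ hτ => ⟨x.2, hτ⟩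
    have hd : ∀ τ ∈ Icc a b,
        |f τ (IccExtend hab u τ) - f τ (IccExtend hab v τ)| ≤ K * dist u v := fun τ hτ =>
      ((hf_lip τ hτ).dist_le_mul _ _).trans (mul_le_mul_of_nonneg_left
        (ContinuousMap.dist_apply_le_dist _) K.2)
    calc dist (T u x) (T v x)
        = |(∫ τ in a..b, k x τ * f τ (IccExtend hab u τ)) -
            ∫ τ in a..b, k x τ * f τ (IccExtend hab v τ)| := by
          rw [Real.dist_eq]
          exact congrArg abs (add_sub_add_right_eq_sub _ _ _)
      _ ≤ (∫ τ in a..b, k x τ) * (K * dist u v) :=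
          abs_integral_mul_sub_integral_mul_le hab hkx (hfu u) (hfu v) (hk_nonneg x x.2) hd
      _ ≤ M * (K * dist u v) := by gcongr; exact hk_int x x.2
      _ = ↑(K * M) * dist u v := by push_cast; ring
  refine ⟨hT.fixedPoint, fun x => ?_, fun u hu => ?_⟩
  · exact (DFunLike.congr_fun hT.fixedPoint_isFixedPt x).symm
  · exact hT.fixedPoint_unique (ContinuousMap.ext fun x => (hu x).symm)

end IntegralEquation

theorem stmt_8 (a b σ K B : ℝ) (ha : 0 < a) (hab : a < b) (hσ1 : 1 < σ)
    (hK : 0 < K)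
    (G : ℝ → ℝ → ℝ)
    (hG : ∀ x τ, G x τ =
      if τ ≤ x then
        (1 / Real.Gamma σ) *
          (((Real.log (x / a) / Real.log (b / a)) ^ (σ - 1) * (Real.log (b / τ)) ^ (σ - 1)
            - (Real.log (x / τ)) ^ (σ - 1)) / τ)
      else
        (1 / Real.Gamma σ) *
          ((Real.log (x / a) / Real.log (b / a)) ^ (σ - 1) * (Real.log (b / τ)) ^ (σ - 1) / τ))
    (F : ℝ → ℝ → ℝ)
    (hFcont : ContinuousOn (fun p : ℝ × ℝ => F p.1 p.2) (Icc a b ×ˢ univ))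
    (hFlip : ∀ x ∈ Icc a b, ∀ ω ϖ : ℝ, |F x ω - F x ϖ| ≤ K * |ω - ϖ|)
    (hsmall : K * (σ - 1) ^ (σ - 1) * (Real.log (b / a)) ^ σ / (σ ^ (σ + 1) * Real.Gamma σ) < 1) :
    ∃! u : C(Icc a b, ℝ), ∀ x : Icc a b,
      u x = (∫ τ in a..b, G (x : ℝ) τ *
              F τ (u ⟨max a (min τ b), by
                constructor
                · exact le_max_left a _
                · exact max_le (le_of_lt hab) (min_le_right τ b)⟩))
            + B * (Real.log ((x : ℝ) / a) / Real.log (b / a)) ^ (σ - 1) := by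
  let g : C(Icc a b, ℝ) := ⟨fun x => B * (log ((x : ℝ) / a) / log (b / a)) ^ (σ - 1), by
    fun_prop (disch := first | linarith | (intro x; have := ha.trans_le x.2.1; positivity))⟩
  have hKC : K.toNNReal * ((σ - 1) ^ (σ - 1) * log (b / a) ^ σ /
      (σ ^ (σ + 1) * Gamma σ)).toNNReal < 1 := by
    rw [← Real.toNNReal_mul hK.le, Real.toNNReal_lt_one]
    simpa only [mul_div_assoc, mul_assoc] using hsmall
  have hsol := existsUnique_eq_integral_mul_add hab.le (continuousOn_greenKernel ha hσ1.le)
    (fun x hx τ hτ => greenKernel_nonneg ha hab hσ1.le hx hτ)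
    (fun x hx => (integral_greenKernel_le ha hab hσ1 hx).trans (Real.le_coe_toNNReal _)) hFcont
    (fun τ hτ => LipschitzWith.of_dist_le_mul fun ω ϖ => by
      simpa only [Real.dist_eq, Real.coe_toNNReal K hK.le] using hFlip τ hτ ω ϖ) hKC g
  refine (existsUnique_congr fun u => forall_congr' fun x => ?_).mpr hsol
  refine Iff.of_eq (congrArg (fun I => u x = I + g x) (intervalIntegral.integral_congr
    fun τ hτ => ?_))
  rw [uIcc_of_le hab.le] at hτ
  rw [IccExtend_of_mem _ _ hτ, hG, ← greenKernel_eq_ite hσ1 (ha.trans_le x.2.1) (ha.trans_le hτ.1)]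
  congr 3
  exact Subtype.ext (by simp [hτ.1, hτ.2])
end

section
/- Let 0 < a < b, 1 < σ ≤ 2, and fix x with a ≤ τ ≤ x ≤ b. Then (ln(x/a)/ln(b/a))^{σ−1}·(ln(b/τ))^{σ−1} ≥ (ln(x/τ))^{σ−1}. -/
open Real

theorem stmt_19 (a b σ τ x : ℝ) (ha : 0 < a) (haτ : a ≤ τ) (hτx : τ ≤ x) (hxb : x ≤ b)
    (hab : a < b) (hσ1 : 1 < σ) (hσ2 : σ ≤ 2) :
    (Real.log (x / a) / Real.log (b / a)) ^ (σ - 1) * (Real.log (b / τ)) ^ (σ - 1)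
      ≥ (Real.log (x / τ)) ^ (σ - 1) := by
  have hτ : 0 < τ := lt_of_lt_of_le ha haτ
  have hx : 0 < x := lt_of_lt_of_le hτ hτx
  have hb : 0 < b := lt_of_lt_of_le hx hxb
  have hba : (0:ℝ) < Real.log (b / a) := Real.log_pos (by rw [lt_div_iff₀ ha]; linarith)
  have hxτ : 0 ≤ Real.log (x / τ) := Real.log_nonneg (by rw [le_div_iff₀ hτ]; linarith)
  have hbτ : 0 ≤ Real.log (b / τ) := Real.log_nonneg (by rw [le_div_iff₀ hτ]; linarith)
  have hτa : 0 ≤ Real.log (τ / a) := Real.log_nonneg (by rw [le_div_iff₀ ha]; linarith)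
  have hxa : 0 ≤ Real.log (x / a) := Real.log_nonneg (by rw [le_div_iff₀ ha]; linarith)
  have e1 : Real.log (x / a) = Real.log (x / τ) + Real.log (τ / a) := by
    rw [← Real.log_mul (by positivity) (by positivity)]
    congr 1; field_simp
  have e2 : Real.log (b / a) = Real.log (b / τ) + Real.log (τ / a) := by
    rw [← Real.log_mul (by positivity) (by positivity)]
    congr 1; field_simp
  have huw : Real.log (x / τ) ≤ Real.log (b / τ) :=
    Real.log_le_log (by positivity) (by gcongr)
  have key : Real.log (x / τ) ≤ Real.log (x / a) / Real.log (b / a) * Real.log (b / τ) := by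
    rw [div_mul_eq_mul_div, le_div_iff₀ hba]
    nlinarith [mul_nonneg hτa (sub_nonneg.mpr huw)]
  calc (Real.log (x / τ)) ^ (σ - 1)
      ≤ (Real.log (x / a) / Real.log (b / a) * Real.log (b / τ)) ^ (σ - 1) :=
        Real.rpow_le_rpow hxτ key (by linarith)
    _ = _ := Real.mul_rpow (div_nonneg hxa hba.le) hbτ
end
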